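/- The logarithmic derivative of the Riemann xi function at s = 0 satisfies ξ′(0)/ξ(0) = (1/2)·log(4π) − 1 − γ/2, where γ is the Euler–Mascheroni constant. Equivalently, since ξ(0) = 1/2, ξ′(0) = (1/4)·log(4π) − 1/2 − γ/4. -/

import Mathlib

open Complex Filter Topology

/-!
Writing `Λ = Λ₀ - 1/s - 1/(1 - s)` with `Λ₀` entire, the polar parts cancel against the factor
`s (s - 1) / 2`, so that `ξ s = s (s - 1) / 2 · Λ₀ s + 1/2`. Differentiating at `0` gives
`ξ'(0) = -Λ₀(0) / 2`, where `Λ₀(0) = Λ₀(1) = (γ - log (4π)) / 2 + 1` comes from the functional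
equation and the constant term `γ` of the Laurent expansion of `ζ` at `1`.
-/

noncomputable def riemannXi (s : ℂ) : ℂ := s * (s - 1) / 2 * completedRiemannZeta₀ s + 1 / 2

lemma riemannXi_eq_mul_completedRiemannZeta {s : ℂ} (hs₀ : s ≠ 0) (hs₁ : s ≠ 1) :
    riemannXi s = s * (s - 1) / 2 * completedRiemannZeta s := by
  have : 1 - s ≠ 0 := sub_ne_zero.mpr hs₁.symm
  rw [riemannXi, completedRiemannZeta_eq]
  field_simp
  ring

lemma riemannXi_zero : riemannXi 0 = 1 / 2 := by
  simp [riemannXi]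

lemma hasDerivAt_riemannXi_zero : HasDerivAt riemannXi (-completedRiemannZeta₀ 0 / 2) 0 := by
  have hpoly : HasDerivAt (fun s : ℂ => s * (s - 1) / 2) (-1 / 2) 0 := by
    simpa using (((hasDerivAt_id (0 : ℂ)).mul ((hasDerivAt_id 0).sub_const 1)).div_const 2)
  exact ((hpoly.mul differentiable_completedZeta₀.differentiableAt.hasDerivAt).add_const
    (1 / 2)).congr_deriv (by ring)

lemma deriv_riemannXi_zero :
    deriv riemannXi 0 =
      ((1 / 4 * Real.log (4 * Real.pi) - 1 / 2 - Real.eulerMascheroniConstant / 4 : ℝ) : ℂ) := by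
  rw [hasDerivAt_riemannXi_zero.deriv, completedRiemannZeta₀_zero,
    ← ofReal_ofNat, ← ofReal_mul, ← ofReal_log (by positivity)]
  push_cast
  ring

lemma Gammaℝ_mul_riemannZeta {s : ℂ} (hs : Gammaℝ s ≠ 0) :
    Gammaℝ s * riemannZeta s = completedRiemannZeta s := by
  have hs₀ : s ≠ 0 := by
    rintro rfl
    exact hs (Gammaℝ_eq_zero_iff.mpr ⟨0, by simp⟩)
  rw [riemannZeta_def_of_ne_zero hs₀, mul_div_cancel₀ _ hs]

lemma Gammaℝ_ne_zero_of_norm_lt_two {s : ℂ} (hs₀ : s ≠ 0) (hs : ‖s‖ < 2) : Gammaℝ s ≠ 0 := by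
  rw [Ne, Gammaℝ_eq_zero_iff]
  rintro ⟨n, rfl⟩
  rcases n.eq_zero_or_pos with rfl | hn
  · simp at hs₀
  · have : (2 : ℝ) ≤ 2 * n := by norm_cast; omega
    rw [norm_neg, show (2 * n : ℂ) = ((2 * n : ℝ) : ℂ) by push_cast; rfl, norm_real,
      Real.norm_of_nonneg (by positivity)] at hs
    linarith

theorem stmt_2 (ξ : ℂ → ℂ)
    (hξ_eq : ∀ s : ℂ, s ≠ 0 → s ≠ 1 →
      ξ s = s * (s - 1) / 2 * (Real.pi : ℂ) ^ (-s / 2) * Complex.Gamma (s / 2) * riemannZeta s)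
    (hξ_zero : ξ 0 = 1 / 2) :
    deriv ξ 0 / ξ 0 =
      ((1 / 2 * Real.log (4 * Real.pi) - 1 - Real.eulerMascheroniConstant / 2 : ℝ) : ℂ) ∧
    deriv ξ 0 =
      ((1 / 4 * Real.log (4 * Real.pi) - 1 / 2 - Real.eulerMascheroniConstant / 4 : ℝ) : ℂ) := by
  have hξ : ξ =ᶠ[𝓝 0] riemannXi := by
    filter_upwards [Metric.ball_mem_nhds (0 : ℂ) one_pos] with s hs
    rw [mem_ball_zero_iff] at hs
    rcases eq_or_ne s 0 with rfl | hs₀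
    · rw [hξ_zero, riemannXi_zero]
    have hs₁ : s ≠ 1 := by rintro rfl; simp at hs
    rw [hξ_eq s hs₀ hs₁, riemannXi_eq_mul_completedRiemannZeta hs₀ hs₁,
      ← Gammaℝ_mul_riemannZeta (Gammaℝ_ne_zero_of_norm_lt_two hs₀ (by linarith)), Gammaℝ_def]
    ring
  have hderiv : deriv ξ 0 = _ := hξ.deriv_eq.trans deriv_riemannXi_zero
  refine ⟨?_, hderiv⟩
  rw [hderiv, hξ_zero]
  push_cast
  ring
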